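/- Let f be a symmetric norm on ℝ^n with f(e_1) = 1, and let ‖·‖_f be the induced unitarily invariant norm on B(H). Assume furthermore that every T ∈ B(H) with ‖T‖_f = s_1(T) has rank at most one. Then two nonzero operators A, B ∈ B(H) satisfy ‖AB‖_f = ‖A‖_f · ‖B‖_f if and only if there exist nonzero vectors x, z ∈ H and a unit vector y ∈ H such that A = x y* and B = y z*. -/

import Mathlib

open scoped InnerProductSpace

variable {H : Type*} [NormedAddCommGroup H] [InnerProductSpace ℂ H] [CompleteSpace H]

/-- The `k`-th singular value (1-indexed) of a bounded operator `A`: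
`s_k(A) = inf {‖A - X‖ : rank X < k}`. -/
noncomputable def sval (k : ℕ) (A : H →L[ℂ] H) : ℝ :=
  sInf { r : ℝ | ∃ X : H →L[ℂ] H,
    Module.rank ℂ (LinearMap.range (X : H →ₗ[ℂ] H)) < (k : Cardinal) ∧ r = ‖A - X‖ }

/-- `f : ℝ^n → ℝ` is a symmetric norm: a norm invariant under permutations of the
coordinates and under sign changes of the coordinates. -/
structure IsSymmetricNorm (n : ℕ) (f : (Fin n → ℝ) → ℝ) : Prop where
  triangle : ∀ x y, f (x + y) ≤ f x + f y
  homog : ∀ (t : ℝ) (x), f (t • x) = |t| * f x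
  definite : ∀ x, x ≠ 0 → 0 < f x
  perm_invariant : ∀ (σ : Equiv.Perm (Fin n)) (x), f (fun i => x (σ i)) = f x
  sign_invariant : ∀ (ε : Fin n → ℝ), (∀ i, ε i = 1 ∨ ε i = -1) →
    ∀ x, f (fun i => ε i * x i) = f x

/-- The unitarily invariant norm induced by a symmetric norm `f` on `ℝ^n`:
`‖A‖_f = f (s_1(A), …, s_n(A))`. -/
noncomputable def normf (n : ℕ) (f : (Fin n → ℝ) → ℝ) (A : H →L[ℂ] H) : ℝ :=
  f (fun j : Fin n => sval (j.1 + 1) A)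

/-- The rank-one operator `x y* : z ↦ ⟨z, y⟩ x` (inner product linear in `z`). -/
noncomputable def rankOne (x y : H) : H →L[ℂ] H :=
  (innerSL ℂ y).smulRight x

/-!
Since `s₁(T) = ‖T‖` and a symmetric norm is monotone in the absolute values of the coordinates,
`f(e₁) = 1` gives `‖T‖ ≤ ‖T‖_f`, while `s_k(AB) ≤ ‖A‖ s_k(B)` and `s_k(AB) ≤ s_k(A) ‖B‖` give
`‖AB‖_f ≤ ‖A‖ ‖B‖_f` and `‖AB‖_f ≤ ‖A‖_f ‖B‖`. Hence `‖AB‖_f = ‖A‖_f ‖B‖_f` forces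
`‖A‖_f = ‖A‖` and `‖B‖_f = ‖B‖`, so `A` and `B` have rank at most one, and on such operators
`‖·‖_f` is the operator norm. Writing `A = x u*` and `B = v z*`, we have `AB = ⟨u, v⟩ x z*`, so the
equality becomes the equality case `|⟨u, v⟩| = ‖u‖ ‖v‖` of Cauchy–Schwarz: `u` and `v` are
multiples of one unit vector `y`.
-/

section SingularValues

variable {E : Type*} [NormedAddCommGroup E] [InnerProductSpace ℂ E]

lemma sval_nonneg (k : ℕ) (A : E →L[ℂ] E) : 0 ≤ sval k A :=
  Real.sInf_nonneg (by rintro r ⟨X, -, rfl⟩; exact norm_nonneg _)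

lemma sval_le_norm_sub {k : ℕ} (A X : E →L[ℂ] E) (hX : (X : E →ₗ[ℂ] E).rank < k) :
    sval k A ≤ ‖A - X‖ :=
  csInf_le ⟨0, by rintro r ⟨X, -, rfl⟩; exact norm_nonneg _⟩ ⟨X, hX, rfl⟩

lemma eq_zero_of_rank_lt_one {X : E →L[ℂ] E} (hX : (X : E →ₗ[ℂ] E).rank < 1) : X = 0 := by
  rw [Cardinal.lt_one_iff, Submodule.rank_eq_zero, LinearMap.range_eq_bot] at hX
  exact ContinuousLinearMap.coe_injective hX

lemma sval_one (A : E →L[ℂ] E) : sval 1 A = ‖A‖ := by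
  refine le_antisymm (by simpa using sval_le_norm_sub (k := 1) A 0 (by simp)) ?_
  refine le_csInf ⟨‖A‖, 0, by simp, by simp⟩ ?_
  rintro _ ⟨X, hX, rfl⟩
  rw [eq_zero_of_rank_lt_one (X := X) (by exact_mod_cast hX), sub_zero]

lemma sval_eq_zero_of_rank_lt {k : ℕ} {A : E →L[ℂ] E} (hA : (A : E →ₗ[ℂ] E).rank < k) :
    sval k A = 0 :=
  le_antisymm (by simpa using sval_le_norm_sub A A hA) (sval_nonneg k A)

lemma sval_le_mul_sval {k : ℕ} (hk : 0 < k) {c : ℝ} (hc : 0 ≤ c) {A B : E →L[ℂ] E}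
    (h : ∀ X : E →L[ℂ] E, (X : E →ₗ[ℂ] E).rank < k →
      ∃ Y : E →L[ℂ] E, (Y : E →ₗ[ℂ] E).rank < k ∧ ‖A - Y‖ ≤ c * ‖B - X‖) :
    sval k A ≤ c * sval k B := by
  rw [sval, sval, ← smul_eq_mul, ← Real.sInf_smul_of_nonneg hc]
  refine le_csInf ⟨c • ‖B‖, ‖B‖, ⟨0, by simpa using hk, by simp⟩, rfl⟩ ?_
  rintro _ ⟨_, ⟨X, hX, rfl⟩, rfl⟩
  obtain ⟨Y, hY, hAY⟩ := h X hX
  exact (sval_le_norm_sub A Y hY).trans hAY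

lemma sval_comp_le_norm_mul {k : ℕ} (hk : 0 < k) (A B : E →L[ℂ] E) :
    sval k (A ∘L B) ≤ ‖A‖ * sval k B := by
  refine sval_le_mul_sval hk (norm_nonneg A) fun X hX => ⟨A ∘L X, ?_, ?_⟩
  · exact (LinearMap.rank_comp_le_right _ _).trans_lt hX
  · rw [← ContinuousLinearMap.comp_sub]
    exact ContinuousLinearMap.opNorm_comp_le _ _

lemma sval_comp_le_mul_norm {k : ℕ} (hk : 0 < k) (A B : E →L[ℂ] E) :
    sval k (A ∘L B) ≤ sval k A * ‖B‖ := by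
  rw [mul_comm]
  refine sval_le_mul_sval hk (norm_nonneg B) fun X hX => ⟨X ∘L B, ?_, ?_⟩
  · exact (LinearMap.rank_comp_le_left _ _).trans_lt hX
  · rw [← ContinuousLinearMap.sub_comp, mul_comm]
    exact ContinuousLinearMap.opNorm_comp_le _ _

end SingularValues

namespace IsSymmetricNorm

variable {n : ℕ} {f : (Fin n → ℝ) → ℝ}

/-- Shrinking one coordinate in absolute value does not increase `f`: the new vector is a convex
combination of `z` and its reflection in the `i`-th coordinate hyperplane. -/
lemma apply_update_le (hf : IsSymmetricNorm n f) (z : Fin n → ℝ) (i : Fin n) {t : ℝ}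
    (ht : |t| ≤ |z i|) : f (Function.update z i t) ≤ f z := by
  rcases eq_or_ne (z i) 0 with hz | hz
  · have ht0 : t = 0 := abs_nonpos_iff.1 (by simpa [hz] using ht)
    rw [ht0, ← hz, Function.update_eq_self]
  set c := t / z i
  have hc : |c| ≤ 1 := by rwa [abs_div, div_le_one (abs_pos.2 hz)]
  have ha : 0 ≤ (1 + c) / 2 := by linarith [neg_abs_le c]
  have hb : 0 ≤ (1 - c) / 2 := by linarith [le_abs_self c]
  set ε : Fin n → ℝ := Function.update 1 i (-1)
  have hε : ∀ j, ε j = 1 ∨ ε j = -1 := fun j => by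
    rcases eq_or_ne j i with rfl | hj <;> simp [ε, Function.update_of_ne, *]
  have hdecomp : Function.update z i t =
      ((1 + c) / 2) • z + ((1 - c) / 2) • fun j => ε j * z j := by
    funext j
    rcases eq_or_ne j i with rfl | hj
    · simp only [Function.update_self, Pi.add_apply, Pi.smul_apply, smul_eq_mul, ε, c]
      field_simp
      ring
    · simp only [Function.update_of_ne hj, Pi.add_apply, Pi.smul_apply, smul_eq_mul, ε,
        Pi.one_apply]
      ring
  calc f (Function.update z i t)
      ≤ |(1 + c) / 2| * f z + |(1 - c) / 2| * f fun j => ε j * z j := by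
        rw [hdecomp, ← hf.homog, ← hf.homog]; exact hf.triangle _ _
    _ = f z := by rw [hf.sign_invariant ε hε, abs_of_nonneg ha, abs_of_nonneg hb]; ring

lemma mono (hf : IsSymmetricNorm n f) {x y : Fin n → ℝ} (hxy : ∀ i, |x i| ≤ |y i|) :
    f x ≤ f y := by
  suffices ∀ s : Finset (Fin n), f (fun i => if i ∈ s then x i else y i) ≤ f y by
    simpa using this Finset.univ
  intro s
  induction s using Finset.induction_on with
  | empty => simp
  | insert a s ha ih =>
    have hupdate : (fun i => if i ∈ insert a s then x i else y i) =
        Function.update (fun i => if i ∈ s then x i else y i) a (x a) := by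
      funext j
      rcases eq_or_ne j a with rfl | hj
      · simp
      · simp [hj]
    rw [hupdate]
    exact (hf.apply_update_le _ a (by simpa [ha] using hxy a)).trans ih

end IsSymmetricNorm

section UnitarilyInvariantNorm

variable {E : Type*} [NormedAddCommGroup E] [InnerProductSpace ℂ E]
  {n : ℕ} {f : (Fin n → ℝ) → ℝ}

lemma normf_comp_le_norm_mul (hf : IsSymmetricNorm n f) (A B : E →L[ℂ] E) :
    normf n f (A ∘L B) ≤ ‖A‖ * normf n f B := by
  rw [normf, normf, ← abs_of_nonneg (norm_nonneg A), ← hf.homog]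
  refine hf.mono fun j => ?_
  rw [abs_of_nonneg (sval_nonneg _ _), Pi.smul_apply, smul_eq_mul,
    abs_of_nonneg (mul_nonneg (norm_nonneg A) (sval_nonneg _ _))]
  exact sval_comp_le_norm_mul j.1.succ_pos A B

lemma normf_comp_le_mul_norm (hf : IsSymmetricNorm n f) (A B : E →L[ℂ] E) :
    normf n f (A ∘L B) ≤ normf n f A * ‖B‖ := by
  rw [normf, normf, mul_comm, ← abs_of_nonneg (norm_nonneg B), ← hf.homog]
  refine hf.mono fun j => ?_
  rw [abs_of_nonneg (sval_nonneg _ _), Pi.smul_apply, smul_eq_mul,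
    abs_of_nonneg (mul_nonneg (norm_nonneg B) (sval_nonneg _ _)), mul_comm]
  exact sval_comp_le_mul_norm j.1.succ_pos A B

variable [NeZero n]

lemma norm_le_normf (hf : IsSymmetricNorm n f) (hf₁ : f (Pi.single 0 1) = 1)
    (A : E →L[ℂ] E) : ‖A‖ ≤ normf n f A := by
  calc ‖A‖ = f (‖A‖ • Pi.single 0 1) := by
        rw [hf.homog, hf₁, abs_of_nonneg (norm_nonneg A), mul_one]
    _ ≤ normf n f A := by
        refine hf.mono fun j => ?_
        rw [abs_of_nonneg (sval_nonneg _ _)]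
        rcases eq_or_ne j 0 with rfl | hj
        · simp [sval_one]
        · simpa [Pi.single_eq_of_ne hj] using sval_nonneg _ A

lemma normf_eq_norm_of_rank_le_one (hf : IsSymmetricNorm n f) (hf₁ : f (Pi.single 0 1) = 1)
    {T : E →L[ℂ] E} (hT : (T : E →ₗ[ℂ] E).rank ≤ 1) : normf n f T = ‖T‖ := by
  have hsval : (fun j : Fin n => sval (j.1 + 1) T) = ‖T‖ • Pi.single 0 1 := by
    funext j
    rcases eq_or_ne j 0 with rfl | hj
    · simp [sval_one]
    · have hj₁ : 1 ≤ j.1 := Nat.one_le_iff_ne_zero.2 (Fin.val_ne_zero_iff.2 hj)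
      rw [sval_eq_zero_of_rank_lt (hT.trans_lt (by exact_mod_cast Nat.lt_succ_of_le hj₁))]
      simp [Pi.single_eq_of_ne hj]
  rw [normf, hsval, hf.homog, hf₁, abs_of_nonneg (norm_nonneg T), mul_one]

lemma normf_comp_eq_mul_iff (hf : IsSymmetricNorm n f) (hf₁ : f (Pi.single 0 1) = 1)
    (hrank : ∀ T : E →L[ℂ] E, normf n f T = ‖T‖ → (T : E →ₗ[ℂ] E).rank ≤ 1)
    {A B : E →L[ℂ] E} (hA : A ≠ 0) (hB : B ≠ 0) :
    normf n f (A ∘L B) = normf n f A * normf n f B ↔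
      (A : E →ₗ[ℂ] E).rank ≤ 1 ∧ (B : E →ₗ[ℂ] E).rank ≤ 1 ∧ ‖A ∘L B‖ = ‖A‖ * ‖B‖ := by
  have rank_comp_le : ∀ A B : E →L[ℂ] E,
      ((A ∘L B : E →L[ℂ] E) : E →ₗ[ℂ] E).rank ≤ (A : E →ₗ[ℂ] E).rank := fun A B =>
    LinearMap.rank_comp_le_left (B : E →ₗ[ℂ] E) (A : E →ₗ[ℂ] E)
  have normf_pos : ∀ T : E →L[ℂ] E, T ≠ 0 → 0 < normf n f T := fun T hT =>
    (norm_pos_iff.2 hT).trans_le (norm_le_normf hf hf₁ T)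
  constructor
  · intro h
    have hA' : normf n f A = ‖A‖ := by
      refine le_antisymm (le_of_mul_le_mul_right ?_ (normf_pos B hB)) (norm_le_normf hf hf₁ A)
      exact h ▸ normf_comp_le_norm_mul hf A B
    have hB' : normf n f B = ‖B‖ := by
      refine le_antisymm (le_of_mul_le_mul_left ?_ (normf_pos A hA)) (norm_le_normf hf hf₁ B)
      exact h ▸ normf_comp_le_mul_norm hf A B
    have hA₁ := hrank A hA'
    refine ⟨hA₁, hrank B hB', ?_⟩
    rwa [normf_eq_norm_of_rank_le_one hf hf₁ ((rank_comp_le A B).trans hA₁), hA', hB'] at h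
  · rintro ⟨hA₁, hB₁, h⟩
    rwa [normf_eq_norm_of_rank_le_one hf hf₁ ((rank_comp_le A B).trans hA₁),
      normf_eq_norm_of_rank_le_one hf hf₁ hA₁, normf_eq_norm_of_rank_le_one hf hf₁ hB₁]

end UnitarilyInvariantNorm

section RankOne

variable {E : Type*} [NormedAddCommGroup E] [InnerProductSpace ℂ E]

lemma rankOne_eq_innerProductSpace_rankOne (x y : E) :
    rankOne x y = InnerProductSpace.rankOne ℂ x y := rfl

lemma rank_rankOne_le (x y : E) : (rankOne x y : E →ₗ[ℂ] E).rank ≤ 1 := by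
  rcases eq_or_ne x 0 with rfl | hx
  · simp [rankOne_eq_innerProductSpace_rankOne]
  rcases eq_or_ne y 0 with rfl | hy
  · simp [rankOne_eq_innerProductSpace_rankOne]
  exact (InnerProductSpace.rank_rankOne hx hy).le

lemma rankOne_comp_rankOne (x u v z : E) :
    rankOne x u ∘L rankOne v z = ⟪u, v⟫_ℂ • rankOne x z :=
  InnerProductSpace.rankOne_comp_rankOne x u v z

lemma rankOne_smul_left (c : ℂ) (x y : E) :
    rankOne (c • x) y = rankOne x ((starRingEnd ℂ) c • y) := by
  simp [rankOne_eq_innerProductSpace_rankOne]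

/-- With `e` a unit vector spanning the range of `T`, `e e*` is the orthogonal projection onto
that range, so `T = e e* ∘ T = e (T* e)*`. -/
lemma exists_eq_rankOne_of_rank_le_one [CompleteSpace E] {T : E →L[ℂ] E}
    (hT : (T : E →ₗ[ℂ] E).rank ≤ 1) : ∃ x y : E, T = rankOne x y := by
  obtain ⟨v, hv⟩ := ((LinearMap.range (T : E →ₗ[ℂ] E)).rank_le_one_iff_isPrincipal.1 hT).principal
  rcases eq_or_ne v 0 with rfl | hv₀
  · refine ⟨0, 0, ContinuousLinearMap.coe_injective ?_⟩
    rw [Submodule.span_zero_singleton, LinearMap.range_eq_bot] at hv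
    simp [hv, rankOne_eq_innerProductSpace_rankOne]
  set e : E := (‖v‖⁻¹ : ℂ) • v
  have he : ‖e‖ = 1 := norm_smul_inv_norm hv₀
  have hspan : ℂ ∙ e = ℂ ∙ v :=
    Submodule.span_singleton_smul_eq (by simpa using hv₀) v
  refine ⟨e, ContinuousLinearMap.adjoint T e, ?_⟩
  rw [rankOne_eq_innerProductSpace_rankOne, ← InnerProductSpace.rankOne_comp]
  ext w
  rw [ContinuousLinearMap.comp_apply, InnerProductSpace.rankOne_apply,
    ← Submodule.starProjection_unit_singleton ℂ he, eq_comm, Submodule.starProjection_eq_self_iff,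
    hspan, ← hv]
  exact LinearMap.mem_range_self _ w

lemma exists_unit_smul_eq_of_norm_inner_eq {u v : E} (hu : u ≠ 0) (hv : v ≠ 0)
    (h : ‖⟪u, v⟫_ℂ‖ = ‖u‖ * ‖v‖) :
    ∃ y : E, ‖y‖ = 1 ∧ ∃ a b : ℂ, a ≠ 0 ∧ b ≠ 0 ∧ u = a • y ∧ v = b • y := by
  obtain ⟨r, hr, rfl⟩ := (norm_inner_eq_norm_iff hu hv).1 h
  have hu' : (‖u‖ : ℂ) ≠ 0 := by simpa using hu
  refine ⟨(‖u‖⁻¹ : ℂ) • u, norm_smul_inv_norm hu, ‖u‖, r * ‖u‖, hu', mul_ne_zero hr hu', ?_, ?_⟩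
  · rw [smul_smul, mul_inv_cancel₀ hu', one_smul]
  · rw [smul_smul, mul_assoc, mul_inv_cancel₀ hu', mul_one]

lemma rank_le_one_and_norm_comp_eq_mul_iff [CompleteSpace E] {A B : E →L[ℂ] E}
    (hA : A ≠ 0) (hB : B ≠ 0) :
    ((A : E →ₗ[ℂ] E).rank ≤ 1 ∧ (B : E →ₗ[ℂ] E).rank ≤ 1 ∧ ‖A ∘L B‖ = ‖A‖ * ‖B‖) ↔
      ∃ x z : E, x ≠ 0 ∧ z ≠ 0 ∧ ∃ y : E, ‖y‖ = 1 ∧ A = rankOne x y ∧ B = rankOne y z := by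
  constructor
  · rintro ⟨hA₁, hB₁, h⟩
    obtain ⟨x, u, rfl⟩ := exists_eq_rankOne_of_rank_le_one hA₁
    obtain ⟨v, z, rfl⟩ := exists_eq_rankOne_of_rank_le_one hB₁
    simp only [ne_eq, rankOne_eq_innerProductSpace_rankOne, InnerProductSpace.rankOne_eq_zero,
      not_or] at hA hB
    rw [rankOne_comp_rankOne, norm_smul, rankOne_eq_innerProductSpace_rankOne,
      rankOne_eq_innerProductSpace_rankOne, rankOne_eq_innerProductSpace_rankOne,
      InnerProductSpace.norm_rankOne, InnerProductSpace.norm_rankOne,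
      InnerProductSpace.norm_rankOne] at h
    have hxz : 0 < ‖x‖ * ‖z‖ := mul_pos (norm_pos_iff.2 hA.1) (norm_pos_iff.2 hB.2)
    have hinner : ‖⟪u, v⟫_ℂ‖ = ‖u‖ * ‖v‖ := by
      refine mul_right_cancel₀ hxz.ne' ?_
      linear_combination h
    obtain ⟨y, hy, a, b, ha, hb, rfl, rfl⟩ := exists_unit_smul_eq_of_norm_inner_eq hA.2 hB.1 hinner
    refine ⟨(starRingEnd ℂ) a • x, (starRingEnd ℂ) b • z, smul_ne_zero (by simpa) hA.1,
      smul_ne_zero (by simpa) hB.2, y, hy, by simp [rankOne_smul_left], rankOne_smul_left b y z⟩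
  · rintro ⟨x, z, -, -, y, hy, rfl, rfl⟩
    refine ⟨rank_rankOne_le x y, rank_rankOne_le y z, ?_⟩
    rw [rankOne_comp_rankOne, inner_self_eq_norm_sq_to_K, hy]
    simp [rankOne_eq_innerProductSpace_rankOne, hy]

end RankOne

theorem stmt10_general (n : ℕ) (hn : 0 < n)
    (f : (Fin n → ℝ) → ℝ) (hf : IsSymmetricNorm n f)
    (hcross : f (Pi.single (⟨0, hn⟩ : Fin n) 1 : Fin n → ℝ) = 1)
    (hrank : ∀ T : H →L[ℂ] H, normf n f T = sval 1 T →
      Module.rank ℂ (LinearMap.range (T : H →ₗ[ℂ] H)) ≤ 1) :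
    ∀ A B : H →L[ℂ] H, A ≠ 0 → B ≠ 0 →
      (normf n f (A ∘L B) = normf n f A * normf n f B ↔
        ∃ (x z : H), x ≠ 0 ∧ z ≠ 0 ∧ ∃ y : H, ‖y‖ = 1 ∧
          A = rankOne x y ∧ B = rankOne y z) := by
  intro A B hA hB
  have : NeZero n := ⟨hn.ne'⟩
  rw [normf_comp_eq_mul_iff hf hcross (fun T hT => hrank T (by rwa [sval_one])) hA hB]
  exact rank_le_one_and_norm_comp_eq_mul_iff hA hB

theorem stmt10 (n : ℕ) (hn : 0 < n) (hdim : (n : Cardinal) ≤ Module.rank ℂ H)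
    (f : (Fin n → ℝ) → ℝ) (hf : IsSymmetricNorm n f)
    (hcross : f (Pi.single (⟨0, hn⟩ : Fin n) 1 : Fin n → ℝ) = 1)
    (hrank : ∀ T : H →L[ℂ] H, normf n f T = sval 1 T →
      Module.rank ℂ (LinearMap.range (T : H →ₗ[ℂ] H)) ≤ 1) :
    ∀ A B : H →L[ℂ] H, A ≠ 0 → B ≠ 0 →
      (normf n f (A ∘L B) = normf n f A * normf n f B ↔
        ∃ (x z : H), x ≠ 0 ∧ z ≠ 0 ∧ ∃ y : H, ‖y‖ = 1 ∧
          A = rankOne x y ∧ B = rankOne y z) :=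
  stmt10_general n hn f hf hcross hrank
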